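/- Let φ be a polynomial self-map of ℂ sending the closed upper half-plane into itself (φ(ℂ₊) ⊆ ℂ₊) such that sup_{z ∈ ℂ₊} Im(z)/Im(φ(z)) < ∞. Then φ has degree at most 1, i.e., φ is affine. -/

import Mathlib

/-!
The leading term dominates at infinity: along a ray `t ↦ t * w` with `Im w > 0`,
`Im p(t w) ~ tⁿ Im(a wⁿ)` where `a` is the leading coefficient and `n = deg p`. If `n ≥ 2`, the
arguments of `a wⁿ` for `w` on the upper half circle sweep an interval of length `nπ ≥ 2π`, so
some such `w` has `Im(a wⁿ) < 0`, and then `p` sends far-out points of that ray into the lower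
half-plane.
-/

open Complex Filter Bornology Topology Polynomial Real

lemma Real.exists_sin_nat_mul_add_neg {n : ℕ} (hn : 2 ≤ n) {β : ℝ} (hβ₁ : -π < β) (hβ₂ : β ≤ π) :
    ∃ θ : ℝ, 0 < θ ∧ θ < π ∧ Real.sin (n * θ + β) < 0 := by
  have hn' : (2 : ℝ) ≤ n := by exact_mod_cast hn
  -- aim `n * θ + β` at `β / 2 ∈ (-π/2, 0)` when `β < 0`,
  -- and at `(π + β) / 3 + π ∈ [4π/3, 5π/3]` otherwise
  rcases lt_or_ge β 0 with hβ | hβ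
  · refine ⟨-β / (2 * n), div_pos (by linarith) (by positivity), ?_, ?_⟩
    · rw [div_lt_iff₀ (by positivity)]
      nlinarith [pi_pos]
    · have harg : n * (-β / (2 * n)) + β = β / 2 := by field_simp; ring
      rw [harg]
      exact Real.sin_neg_of_neg_of_neg_pi_lt (by linarith) (by linarith)
  · refine ⟨(π + (π - 2 * β) / 3) / n, div_pos (by linarith [pi_pos]) (by positivity), ?_, ?_⟩
    · rw [div_lt_iff₀ (by positivity)]
      nlinarith [pi_pos]
    · have harg : n * ((π + (π - 2 * β) / 3) / n) + β = (π + β) / 3 + π := by field_simp; ring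
      rw [harg, Real.sin_add_pi, neg_lt_zero]
      exact Real.sin_pos_of_pos_of_lt_pi (by linarith) (by linarith)

lemma Complex.im_mul_exp_mul_I_pow (a : ℂ) (θ : ℝ) (n : ℕ) :
    (a * exp (θ * I) ^ n).im = ‖a‖ * Real.sin (n * θ + a.arg) := by
  conv_lhs => rw [← norm_mul_exp_arg_mul_I a, ← exp_nat_mul, mul_assoc, ← exp_add,
    show a.arg * I + n * (θ * I) = ((n * θ + a.arg : ℝ) : ℂ) * I by push_cast; ring]
  rw [im_ofReal_mul, exp_ofReal_mul_I_im]

lemma Complex.exists_im_pos_im_mul_pow_neg {a : ℂ} (ha : a ≠ 0) {n : ℕ} (hn : 2 ≤ n) :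
    ∃ w : ℂ, 0 < w.im ∧ (a * w ^ n).im < 0 := by
  obtain ⟨θ, hθ₀, hθπ, hsin⟩ := Real.exists_sin_nat_mul_add_neg hn (neg_pi_lt_arg a) (arg_le_pi a)
  refine ⟨exp (θ * I), ?_, ?_⟩
  · rw [exp_ofReal_mul_I_im]
    exact Real.sin_pos_of_pos_of_lt_pi hθ₀ hθπ
  · rw [im_mul_exp_mul_I_pow]
    exact mul_neg_of_pos_of_neg (norm_pos_iff.mpr ha) hsin

lemma Polynomial.tendsto_eval_div_leading_monomial {R : Type*} [NormedField R] {p : R[X]}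
    (hp : p ≠ 0) :
    Tendsto (fun z ↦ p.eval z / (p.leadingCoeff * z ^ p.natDegree)) (cobounded R) (𝓝 1) := by
  refine (Asymptotics.isEquivalent_iff_tendsto_one ?_).mp isEquivalent_cobounded_leading_monomial
  filter_upwards [eventually_ne_cobounded 0] with z hz
  exact mul_ne_zero (leadingCoeff_ne_zero.mpr hp) (pow_ne_zero _ hz)

lemma Complex.tendsto_ofReal_mul_cobounded {w : ℂ} (hw : w ≠ 0) :
    Tendsto (fun t : ℝ ↦ (t : ℂ) * w) atTop (cobounded ℂ) := by
  rw [← tendsto_norm_atTop_iff_cobounded]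
  simp only [norm_mul, norm_real, Real.norm_eq_abs]
  exact (tendsto_abs_atTop_atTop.comp tendsto_id).atTop_mul_const (norm_pos_iff.mpr hw)

lemma Polynomial.eventually_im_eval_ofReal_mul_neg {p : ℂ[X]} (hp : p ≠ 0) {w : ℂ}
    (hw₀ : w ≠ 0) (hw : (p.leadingCoeff * w ^ p.natDegree).im < 0) :
    ∀ᶠ t : ℝ in atTop, (p.eval (t * w)).im < 0 := by
  set q := fun t : ℝ ↦ p.eval (t * w) / (p.leadingCoeff * (t * w) ^ p.natDegree)
  set c := p.leadingCoeff * w ^ p.natDegree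
  have hq : Tendsto q atTop (𝓝 1) :=
    (tendsto_eval_div_leading_monomial hp).comp (tendsto_ofReal_mul_cobounded hw₀)
  have hlim : Tendsto (fun t ↦ (q t * c).im) atTop (𝓝 c.im) := by
    simpa only [one_mul, Function.comp_def] using (continuous_im.tendsto _).comp (hq.mul_const c)
  filter_upwards [hlim.eventually (gt_mem_nhds hw), eventually_gt_atTop 0] with t ht ht₀
  have hmonomial : p.leadingCoeff * ((t : ℂ) * w) ^ p.natDegree ≠ 0 :=
    mul_ne_zero (leadingCoeff_ne_zero.mpr hp) <|
      pow_ne_zero _ (mul_ne_zero (ofReal_ne_zero.mpr ht₀.ne') hw₀)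
  have heval : p.eval (t * w) = ((t ^ p.natDegree : ℝ) : ℂ) * (q t * c) := by
    calc p.eval (t * w) = q t * (p.leadingCoeff * (t * w) ^ p.natDegree) :=
          (div_mul_cancel₀ _ hmonomial).symm
      _ = _ := by push_cast; ring
  rw [heval, im_ofReal_mul]
  exact mul_neg_of_pos_of_neg (by positivity) ht

theorem stmt12_general (p : Polynomial ℂ)
    (hmap : ∀ z : ℂ, 0 < z.im → 0 < (p.eval z).im) :
    p.degree ≤ 1 := by
  refine natDegree_le_iff_degree_le.mp ?_
  by_contra! hn
  have hp : p ≠ 0 := ne_zero_of_natDegree_gt hn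
  obtain ⟨w, hw_im, hw⟩ := exists_im_pos_im_mul_pow_neg (leadingCoeff_ne_zero.mpr hp) hn
  have hw₀ : w ≠ 0 := by rintro rfl; simp at hw_im
  obtain ⟨t, hneg, ht₀⟩ :=
    ((eventually_im_eval_ofReal_mul_neg hp hw₀ hw).and (eventually_gt_atTop 0)).exists
  exact lt_asymm hneg (hmap (t * w) (by rw [im_ofReal_mul]; positivity))

theorem stmt12 (p : Polynomial ℂ) (M : ℝ) (hM : 0 < M)
    (hmap : ∀ z : ℂ, 0 < z.im → 0 < (p.eval z).im)
    (hbd : ∀ z : ℂ, 0 < z.im → z.im ≤ M * (p.eval z).im) :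
    p.degree ≤ 1 :=
  stmt12_general p hmap
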